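/- arXiv:1501.03550 — 7 statements merged into one kernel-verified Lean document; each statement's English description precedes it below -/
import Mathlib

section
/- Let d ≥ 1, let ε > 0, and let Λ : (−ε, ε) → GL(d, ℝ) be a differentiable family of invertible real d×d matrices. Then the following are equivalent: (i) for all τ₁ < τ₂ in (−ε, ε), the matrix Λ(τ₁)·Λ(τ₂)⁻¹ is a contraction, i.e. its operator norm as a linear map of Euclidean space ℝ^d is at most 1; (ii) for every τ ∈ (−ε, ε), the derivative at τ of the curve of Gram matrices ω(τ) = Λ(τ)ᵀ·Λ(τ) is a positive semidefinite matrix. -/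
open scoped Matrix

/-- The operator norm of a real `d × d` matrix viewed as a linear map of
Euclidean space `ℝ^d` (with the Euclidean norm). -/
noncomputable def matrixOpNorm {d : ℕ} (A : Matrix (Fin d) (Fin d) ℝ) : ℝ :=
  ‖LinearMap.toContinuousLinearMap (Matrix.toEuclideanLin A)‖

/-!
Substituting `x = Λ(τ₂) v` in `‖Λ(τ₁) Λ(τ₂)⁻¹ x‖ ≤ ‖x‖`, the contraction property says that
`‖Λ(τ₁) v‖ ≤ ‖Λ(τ₂) v‖` for all `v`, i.e. that each quadratic form `τ ↦ vᵀ ω(τ) v` is monotone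
on the interval, where `ω = ΛᵀΛ`. A differentiable function on an open interval is monotone iff
its derivative is nonnegative, and the derivative of `vᵀ ω(τ) v` is `vᵀ ω'(τ) v`. Since `ω'` is
symmetric, nonnegativity of all these forms is positive semidefiniteness of `ω'`.
-/

open Set Matrix

lemma monotoneOn_iff_hasDerivAt_nonneg {D : Set ℝ} (hD : Convex ℝ D) (hDo : IsOpen D)
    {f f' : ℝ → ℝ} (hf : ∀ t ∈ D, HasDerivAt f (f' t) t) :
    MonotoneOn f D ↔ ∀ t ∈ D, 0 ≤ f' t := by
  refine ⟨fun hmono t ht => ?_, fun hf'₀ => ?_⟩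
  · exact (hf t ht).hasDerivWithinAt.nonneg_of_monotoneOn (hDo.preperfect t ht) hmono
  · exact monotoneOn_of_hasDerivWithinAt_nonneg hD
      (fun t ht => (hf t ht).continuousAt.continuousWithinAt)
      (fun t ht => (hf t (interior_subset ht)).hasDerivWithinAt)
      fun t ht => hf'₀ t (interior_subset ht)

namespace Matrix

lemma dotProduct_transpose_mul_self_mulVec {m n R : Type*} [Fintype m] [Fintype n]
    [CommSemiring R] (A : Matrix m n R) (v : n → R) :
    v ⬝ᵥ (Aᵀ * A) *ᵥ v = (A *ᵥ v) ⬝ᵥ (A *ᵥ v) := by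
  rw [← mulVec_mulVec, dotProduct_mulVec, vecMul_transpose]

variable {n : Type*} [Fintype n]

lemma posSemidef_iff_dotProduct_mulVec_nonneg_of_isHermitian {M : Matrix n n ℝ}
    (hM : M.IsHermitian) : M.PosSemidef ↔ ∀ v, 0 ≤ v ⬝ᵥ M *ᵥ v := by
  simp only [posSemidef_iff_dotProduct_mulVec, star_trivial, hM, true_and]

omit [Fintype n] in
lemma isHermitian_deriv_apply_of_transpose_eq {ω : ℝ → Matrix n n ℝ} (hω : ∀ t, (ω t)ᵀ = ω t) (τ : ℝ) :
    (of fun i j => deriv (fun t => ω t i j) τ).IsHermitian := by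
  ext i j
  simp only [conjTranspose_apply, of_apply, star_trivial]
  congr! 2 with t
  exact congr_fun₂ (hω t) i j

lemma differentiableAt_transpose_mul_self_apply {Λ : ℝ → Matrix n n ℝ} {τ : ℝ}
    (hΛ : ∀ i j, DifferentiableAt ℝ (fun t => Λ t i j) τ) (i j : n) :
    DifferentiableAt ℝ (fun t => ((Λ t)ᵀ * Λ t) i j) τ := by
  simp only [mul_apply, transpose_apply]
  fun_prop

lemma hasDerivAt_dotProduct_mulVec {ω : ℝ → Matrix n n ℝ} {ω' : Matrix n n ℝ} {t : ℝ}
    (hω : ∀ i j, HasDerivAt (fun s => ω s i j) (ω' i j) t) (v : n → ℝ) :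
    HasDerivAt (fun s => v ⬝ᵥ ω s *ᵥ v) (v ⬝ᵥ ω' *ᵥ v) t := by
  simp only [dotProduct, mulVec]
  exact HasDerivAt.fun_sum fun i _ =>
    (HasDerivAt.fun_sum fun j _ => (hω i j).mul_const (v j)).const_mul (v i)

lemma forall_monotoneOn_dotProduct_mulVec_iff {D : Set ℝ} (hD : Convex ℝ D) (hDo : IsOpen D)
    {ω ω' : ℝ → Matrix n n ℝ}
    (hω : ∀ t ∈ D, ∀ i j, HasDerivAt (fun s => ω s i j) (ω' t i j) t) :
    (∀ v, MonotoneOn (fun t => v ⬝ᵥ ω t *ᵥ v) D) ↔ ∀ t ∈ D, ∀ v, 0 ≤ v ⬝ᵥ ω' t *ᵥ v := by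
  simp only [monotoneOn_iff_hasDerivAt_nonneg hD hDo
    fun t ht => hasDerivAt_dotProduct_mulVec (hω t ht) _]
  exact ⟨fun h t ht v => h v t ht, fun h v t ht => h t ht v⟩

end Matrix

section OpNorm

variable {d : ℕ}

lemma matrixOpNorm_le_one_iff (A : Matrix (Fin d) (Fin d) ℝ) :
    matrixOpNorm A ≤ 1 ↔ ∀ x, (A *ᵥ x) ⬝ᵥ (A *ᵥ x) ≤ x ⬝ᵥ x := by
  rw [matrixOpNorm, ContinuousLinearMap.opNorm_le_iff zero_le_one,
    (WithLp.linearEquiv 2 ℝ (Fin d → ℝ)).symm.forall_congr_left]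
  refine forall_congr' fun x => ?_
  rw [one_mul, ← sq_le_sq₀ (norm_nonneg _) (norm_nonneg _), ← real_inner_self_eq_norm_sq,
    ← real_inner_self_eq_norm_sq]
  rfl

lemma matrixOpNorm_mul_inv_le_one_iff (A B : Matrix (Fin d) (Fin d) ℝ) (hB : IsUnit B.det) :
    matrixOpNorm (A * B⁻¹) ≤ 1 ↔ ∀ v, v ⬝ᵥ (Aᵀ * A) *ᵥ v ≤ v ⬝ᵥ (Bᵀ * B) *ᵥ v := by
  rw [matrixOpNorm_le_one_iff,
    (mulVec_surjective_iff_isUnit.mpr ((isUnit_iff_isUnit_det B).mpr hB)).forall]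
  simp only [mulVec_mulVec, nonsing_inv_mul_cancel_right B A hB,
    dotProduct_transpose_mul_self_mulVec]

lemma forall_lt_matrixOpNorm_mul_inv_le_one_iff {α : Type*} [PartialOrder α] {s : Set α}
    {Λ : α → Matrix (Fin d) (Fin d) ℝ} (hΛ : ∀ t ∈ s, IsUnit (Λ t).det) :
    (∀ t₁ ∈ s, ∀ t₂ ∈ s, t₁ < t₂ → matrixOpNorm (Λ t₁ * (Λ t₂)⁻¹) ≤ 1) ↔
      ∀ v, MonotoneOn (fun t => v ⬝ᵥ ((Λ t)ᵀ * Λ t) *ᵥ v) s := by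
  simp only [monotoneOn_iff_forall_lt]
  constructor
  · intro h v t₁ h₁ t₂ h₂ hlt
    exact (matrixOpNorm_mul_inv_le_one_iff _ _ (hΛ t₂ h₂)).mp (h t₁ h₁ t₂ h₂ hlt) v
  · intro h t₁ h₁ t₂ h₂ hlt
    exact (matrixOpNorm_mul_inv_le_one_iff _ _ (hΛ t₂ h₂)).mpr fun v => h v h₁ h₂ hlt

end OpNorm

theorem stmt_0_general (d : ℕ) (ε : ℝ)
    (Λ Λ' : ℝ → Matrix (Fin d) (Fin d) ℝ)
    (hinv : ∀ τ ∈ Set.Ioo (-ε) ε, IsUnit (Λ τ).det)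
    (hderiv : ∀ τ ∈ Set.Ioo (-ε) ε, ∀ i j,
      HasDerivAt (fun t => Λ t i j) (Λ' τ i j) τ) :
    (∀ τ₁ ∈ Set.Ioo (-ε) ε, ∀ τ₂ ∈ Set.Ioo (-ε) ε, τ₁ < τ₂ →
        matrixOpNorm (Λ τ₁ * (Λ τ₂)⁻¹) ≤ 1) ↔
      (∀ τ ∈ Set.Ioo (-ε) ε,
        Matrix.PosSemidef
          (Matrix.of fun i j => deriv (fun t => ((Λ t)ᵀ * Λ t) i j) τ)) := by
  have hgram : ∀ τ ∈ Ioo (-ε) ε, ∀ i j, HasDerivAt (fun t => ((Λ t)ᵀ * Λ t) i j)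
      ((of fun i j => deriv (fun t => ((Λ t)ᵀ * Λ t) i j) τ) i j) τ := fun τ hτ i j =>
    (differentiableAt_transpose_mul_self_apply
      (fun k l => (hderiv τ hτ k l).differentiableAt) i j).hasDerivAt
  rw [forall_lt_matrixOpNorm_mul_inv_le_one_iff hinv,
    forall_monotoneOn_dotProduct_mulVec_iff (convex_Ioo _ _) isOpen_Ioo hgram]
  refine forall₂_congr fun τ _ => (posSemidef_iff_dotProduct_mulVec_nonneg_of_isHermitian
    (isHermitian_deriv_apply_of_transpose_eq (fun t => ?_) τ)).symm
  rw [transpose_mul, transpose_transpose]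

/-- For a differentiable family `Λ : (-ε, ε) → GL(d, ℝ)` of invertible
matrices, the comparison operators `Λ(τ₁)·Λ(τ₂)⁻¹` (for `τ₁ < τ₂`) are all contractions
iff the entrywise derivative of the Gram curve `ω(τ) = Λ(τ)ᵀ·Λ(τ)` is positive
semidefinite at every `τ`. -/
theorem stmt_0 (d : ℕ) (hd : 1 ≤ d) (ε : ℝ) (hε : 0 < ε)
    (Λ Λ' : ℝ → Matrix (Fin d) (Fin d) ℝ)
    (hinv : ∀ τ ∈ Set.Ioo (-ε) ε, IsUnit (Λ τ).det)
    (hderiv : ∀ τ ∈ Set.Ioo (-ε) ε, ∀ i j,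
      HasDerivAt (fun t => Λ t i j) (Λ' τ i j) τ) :
    (∀ τ₁ ∈ Set.Ioo (-ε) ε, ∀ τ₂ ∈ Set.Ioo (-ε) ε, τ₁ < τ₂ →
        matrixOpNorm (Λ τ₁ * (Λ τ₂)⁻¹) ≤ 1) ↔
      (∀ τ ∈ Set.Ioo (-ε) ε,
        Matrix.PosSemidef
          (Matrix.of fun i j => deriv (fun t => ((Λ t)ᵀ * Λ t) i j) τ)) :=
  stmt_0_general d ε Λ Λ' hinv hderiv
end

section
/- Let ε > 0 and let Λ : (−ε, ε) → GL(d, ℝ) be a differentiable family of invertible real d×d matrices such that for every τ the derivative of ω(τ) = Λ(τ)ᵀ·Λ(τ) at τ is positive semidefinite. Then the function τ ↦ |det Λ(τ)| is non-decreasing on (−ε, ε). -/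
/-!
With `ω = ΛᵀΛ` we have `det ω = (det Λ)²`, so it suffices that `det ω` is non-decreasing. By
Jacobi's formula `(det ω)' = tr (adj ω · ω')`. Since `Λ` is invertible, `ω` is positive definite,
so `adj ω = det ω · ω⁻¹` is positive semidefinite, and the trace of a product of two positive
semidefinite matrices is nonnegative.
-/

open Matrix

namespace Matrix

section Calculus

variable {m n p 𝕜 : Type*} [Fintype n] [NontriviallyNormedField 𝕜]

theorem hasDerivAt_mul_apply {A : 𝕜 → Matrix m n 𝕜} {B : 𝕜 → Matrix n p 𝕜}
    {A' : Matrix m n 𝕜} {B' : Matrix n p 𝕜} {τ : 𝕜}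
    (hA : ∀ i j, HasDerivAt (fun t => A t i j) (A' i j) τ)
    (hB : ∀ i j, HasDerivAt (fun t => B t i j) (B' i j) τ) (i : m) (k : p) :
    HasDerivAt (fun t => (A t * B t) i k) ((A' * B τ + A τ * B') i k) τ := by
  simp only [mul_apply, add_apply, ← Finset.sum_add_distrib]
  exact HasDerivAt.fun_sum fun j _ => (hA i j).mul (hB j k)

variable [DecidableEq n]

theorem det_updateRow_eq_sum_mul_adjugate (A : Matrix n n 𝕜) (i : n) (b : n → 𝕜) :
    (A.updateRow i b).det = ∑ k, b k * A.adjugate k i := by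
  rw [← cramer_transpose_apply, cramer_eq_adjugate_mulVec, ← adjugate_transpose]
  simp [mulVec, dotProduct, mul_comm]

theorem sum_det_updateRow_eq_trace_adjugate_mul (A B : Matrix n n 𝕜) :
    ∑ i, (A.updateRow i (B i)).det = (A.adjugate * B).trace := by
  simp only [det_updateRow_eq_sum_mul_adjugate, trace, diag, mul_apply]
  rw [Finset.sum_comm]
  simp [mul_comm]

def detRowContinuousMultilinear : ContinuousMultilinearMap 𝕜 (fun _ : n => n → 𝕜) 𝕜 :=
  { (detRowAlternating : (n → 𝕜) [⋀^n]→ₗ[𝕜] 𝕜).toMultilinearMap with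
    cont := continuous_id.matrix_det }

/-- **Jacobi's formula**. -/
theorem hasDerivAt_det {A : 𝕜 → Matrix n n 𝕜} {A' : Matrix n n 𝕜} {τ : 𝕜}
    (h : ∀ i j, HasDerivAt (fun t => A t i j) (A' i j) τ) :
    HasDerivAt (fun t => (A t).det) ((A τ).adjugate * A').trace τ := by
  have hA : HasDerivAt (fun t => (A t : n → n → 𝕜)) (A' : n → n → 𝕜) τ :=
    hasDerivAt_pi.2 fun i => hasDerivAt_pi.2 fun j => h i j
  exact ((detRowContinuousMultilinear.hasFDerivAt (A τ)).comp_hasDerivAt τ hA).congr_deriv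
    ((ContinuousMultilinearMap.linearDeriv_apply _ _ _).trans
      (sum_det_updateRow_eq_trace_adjugate_mul _ _))

end Calculus

section Positivity

open scoped ComplexOrder MatrixOrder

variable {n 𝕜 : Type*} [Fintype n] [RCLike 𝕜]

theorem PosSemidef.trace_mul_nonneg {P Q : Matrix n n 𝕜} (hP : P.PosSemidef)
    (hQ : Q.PosSemidef) : 0 ≤ (P * Q).trace := by
  classical
  obtain ⟨B, rfl⟩ := CStarAlgebra.nonneg_iff_eq_star_mul_self.mp hQ.nonneg
  rw [← mul_assoc, trace_mul_comm, ← mul_assoc]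
  exact (hP.mul_mul_conjTranspose_same B).trace_nonneg

theorem PosDef.posSemidef_adjugate [DecidableEq n] {A : Matrix n n 𝕜} (hA : A.PosDef) :
    A.adjugate.PosSemidef := by
  have hdet := hA.det_pos
  have hadj : A.adjugate = A.det • A⁻¹ := by
    rw [inv_def, smul_smul, Ring.mul_inverse_cancel _ hdet.ne'.isUnit, one_smul]
  rw [hadj]
  exact hA.inv.posSemidef.smul hdet.le

end Positivity

end Matrix

theorem monotoneOn_of_hasDerivAt_nonneg {D : Set ℝ} (hD : Convex ℝ D) {f f' : ℝ → ℝ}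
    (hf : ∀ x ∈ D, HasDerivAt f (f' x) x) (hf' : ∀ x ∈ D, 0 ≤ f' x) : MonotoneOn f D :=
  monotoneOn_of_hasDerivWithinAt_nonneg hD
    (fun x hx => (hf x hx).continuousAt.continuousWithinAt)
    (fun x hx => (hf x (interior_subset hx)).hasDerivWithinAt)
    (fun x hx => hf' x (interior_subset hx))

theorem stmt_6_general (d : ℕ) (ε : ℝ)
    (Λ Λ' : ℝ → Matrix (Fin d) (Fin d) ℝ)
    (hinv : ∀ τ ∈ Set.Ioo (-ε) ε, IsUnit (Λ τ).det)
    (hderiv : ∀ τ ∈ Set.Ioo (-ε) ε, ∀ i j,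
      HasDerivAt (fun t => Λ t i j) (Λ' τ i j) τ)
    (hpsd : ∀ τ ∈ Set.Ioo (-ε) ε,
      Matrix.PosSemidef
        (Matrix.of fun i j => deriv (fun t => ((Λ t)ᵀ * Λ t) i j) τ)) :
    MonotoneOn (fun τ => |(Λ τ).det|) (Set.Ioo (-ε) ε) := by
  set ω' : ℝ → Matrix (Fin d) (Fin d) ℝ := fun τ => (Λ' τ)ᵀ * Λ τ + (Λ τ)ᵀ * Λ' τ
  have hgram : ∀ τ ∈ Set.Ioo (-ε) ε, ∀ i j,
      HasDerivAt (fun t => ((Λ t)ᵀ * Λ t) i j) (ω' τ i j) τ := fun τ hτ =>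
    hasDerivAt_mul_apply (fun i j => hderiv τ hτ j i) (hderiv τ hτ)
  have hω' : ∀ τ ∈ Set.Ioo (-ε) ε, (ω' τ).PosSemidef := fun τ hτ => by
    convert hpsd τ hτ using 1
    ext i j
    exact (hgram τ hτ i j).deriv.symm
  have hω : ∀ τ ∈ Set.Ioo (-ε) ε, ((Λ τ)ᵀ * Λ τ).PosDef := fun τ hτ =>
    PosDef.conjTranspose_mul_self _ (mulVec_injective_iff_isUnit.mpr
      ((isUnit_iff_isUnit_det _).mpr (hinv τ hτ)))
  have hmono : MonotoneOn (fun t => ((Λ t)ᵀ * Λ t).det) (Set.Ioo (-ε) ε) :=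
    monotoneOn_of_hasDerivAt_nonneg (convex_Ioo _ _)
      (fun τ hτ => hasDerivAt_det (hgram τ hτ))
      (fun τ hτ => (hω τ hτ).posSemidef_adjugate.trace_mul_nonneg (hω' τ hτ))
  intro a ha b hb hab
  simpa only [det_mul, det_transpose, ← sq, sq_le_sq] using hmono ha hb hab

/-- If `Λ : (-ε, ε) → GL(d, ℝ)` is a differentiable family of invertible
matrices such that the derivative of the Gram curve `ω(τ) = Λ(τ)ᵀ·Λ(τ)` is positive
semidefinite at every `τ`, then `τ ↦ |det Λ(τ)|` is non-decreasing on `(-ε, ε)`. -/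
theorem stmt_6 (d : ℕ) (ε : ℝ) (hε : 0 < ε)
    (Λ Λ' : ℝ → Matrix (Fin d) (Fin d) ℝ)
    (hinv : ∀ τ ∈ Set.Ioo (-ε) ε, IsUnit (Λ τ).det)
    (hderiv : ∀ τ ∈ Set.Ioo (-ε) ε, ∀ i j,
      HasDerivAt (fun t => Λ t i j) (Λ' τ i j) τ)
    (hpsd : ∀ τ ∈ Set.Ioo (-ε) ε,
      Matrix.PosSemidef
        (Matrix.of fun i j => deriv (fun t => ((Λ t)ᵀ * Λ t) i j) τ)) :
    MonotoneOn (fun τ => |(Λ τ).det|) (Set.Ioo (-ε) ε) :=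
  stmt_6_general d ε Λ Λ' hinv hderiv hpsd
end

section
/- Let Λ₀ and Λ₁ be real d×d matrices with Λ₁ invertible, and suppose that for every integer vector z ∈ ℤ^d one has ‖Λ₀ z‖ ≤ ‖Λ₁ z‖ in the Euclidean norm. Then the operator norm of Λ₀·Λ₁⁻¹ as a linear map of Euclidean space ℝ^d is at most 1. -/
open scoped Matrix

/-- The Euclidean norm of a vector in `ℝ^d`. -/
noncomputable def euclNorm {d : ℕ} (v : Fin d → ℝ) : ℝ :=
  ‖(EuclideanSpace.equiv (Fin d) ℝ).symm v‖

/-- If `Λ₁` is invertible and `‖Λ₀ z‖ ≤ ‖Λ₁ z‖` for every integer vector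
`z ∈ ℤ^d`, then `Λ₀·Λ₁⁻¹` has operator norm at most `1` on Euclidean space `ℝ^d`. -/
theorem stmt_7 (d : ℕ) (Λ₀ Λ₁ : Matrix (Fin d) (Fin d) ℝ) (h₁ : IsUnit Λ₁.det)
    (h : ∀ z : Fin d → ℤ,
      euclNorm (Λ₀.mulVec fun i => (z i : ℝ)) ≤ euclNorm (Λ₁.mulVec fun i => (z i : ℝ))) :
    matrixOpNorm (Λ₀ * Λ₁⁻¹) ≤ 1 := by
  -- continuity of v ↦ euclNorm (A.mulVec v)
  have hcont : ∀ A : Matrix (Fin d) (Fin d) ℝ,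
      Continuous fun v : Fin d → ℝ => euclNorm (A.mulVec v) := by
    intro A
    have h1 : Continuous fun v : Fin d → ℝ => A.mulVec v :=
      A.mulVecLin.continuous_of_finiteDimensional
    have h2 : Continuous fun w : Fin d → ℝ =>
        ‖(EuclideanSpace.equiv (Fin d) ℝ).symm w‖ :=
      (continuous_norm.comp (EuclideanSpace.equiv (Fin d) ℝ).symm.continuous)
    exact h2.comp h1
  -- homogeneity of euclNorm
  have hsmul : ∀ (c : ℝ) (v : Fin d → ℝ), euclNorm (c • v) = |c| * euclNorm v := by
    intro c v
    simp only [euclNorm, map_smul, norm_smul, Real.norm_eq_abs]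
  -- the key pointwise inequality for all real vectors
  have key : ∀ v : Fin d → ℝ, euclNorm (Λ₀.mulVec v) ≤ euclNorm (Λ₁.mulVec v) := by
    set S : Set (Fin d → ℝ) :=
      {v | euclNorm (Λ₀.mulVec v) ≤ euclNorm (Λ₁.mulVec v)} with hS
    have hclosed : IsClosed S :=
      isClosed_le (hcont Λ₀) (hcont Λ₁)
    -- rational vectors lie in S
    have hrat : ∀ q : Fin d → ℚ, (fun i => ((q i : ℝ))) ∈ S := by
      intro q
      set n : ℕ := ∏ i, (q i).den with hn
      have hnpos : 0 < n := Finset.prod_pos fun i _ => (q i).pos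
      set z : Fin d → ℤ := fun i => (q i).num * ((n : ℤ) / ((q i).den : ℤ)) with hz
      have hcast : ∀ i, ((z i : ℚ)) = (n : ℚ) * q i := by
        intro i
        have hdvd : ((q i).den : ℤ) ∣ (n : ℤ) := by
          exact_mod_cast Int.natCast_dvd_natCast.mpr
            (Finset.dvd_prod_of_mem (fun i => (q i).den) (Finset.mem_univ i))
        have hden : (((q i).den : ℤ) : ℚ) ≠ 0 := by
          exact_mod_cast Nat.cast_ne_zero.mpr (q i).den_nz
        have : (((n : ℤ) / ((q i).den : ℤ) : ℤ) : ℚ) = (n : ℚ) / ((q i).den : ℚ) := by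
          rw [Int.cast_div hdvd hden]; push_cast; ring
        rw [hz]
        push_cast [this]
        conv_rhs => rw [← Rat.num_div_den (q i)]
        ring
      have hvec : (fun i => ((q i : ℝ))) = ((n : ℝ))⁻¹ • fun i => ((z i : ℝ)) := by
        funext i
        have := hcast i
        have : ((z i : ℝ)) = (n : ℝ) * (q i : ℝ) := by exact_mod_cast congrArg (Rat.cast : ℚ → ℝ) this
        rw [Pi.smul_apply, this, smul_eq_mul]
        field_simp
      have hZ := h z
      rw [hS, Set.mem_setOf_eq, hvec, Matrix.mulVec_smul, Matrix.mulVec_smul,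
        hsmul, hsmul]
      exact mul_le_mul_of_nonneg_left hZ (abs_nonneg _)
    -- density of rational vectors
    have hdense : Dense S := by
      have hpi : Dense (Set.pi Set.univ fun _ : Fin d =>
          Set.range ((↑) : ℚ → ℝ)) :=
        dense_pi Set.univ fun i _ => Rat.denseRange_cast
      refine hpi.mono ?_
      intro v hv
      choose q hq using fun i => hv i (Set.mem_univ i)
      have : v = fun i => ((q i : ℝ)) := by funext i; exact (hq i).symm
      rw [this]; exact hrat q
    have : S = Set.univ := hclosed.closure_eq ▸ hdense.closure_eq
    intro v
    have : v ∈ S := this ▸ Set.mem_univ v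
    exact this
  -- conclude the operator norm bound
  rw [matrixOpNorm]
  refine ContinuousLinearMap.opNorm_le_bound _ zero_le_one ?_
  intro x
  rw [one_mul, LinearMap.coe_toContinuousLinearMap']
  set w : Fin d → ℝ := WithLp.equiv 2 (Fin d → ℝ) x with hw
  set v : Fin d → ℝ := Λ₁⁻¹.mulVec w with hv
  have hMul : (Λ₀ * Λ₁⁻¹).mulVec w = Λ₀.mulVec v := by
    rw [hv, Matrix.mulVec_mulVec]
  have hback : Λ₁.mulVec v = w := by
    rw [hv, Matrix.mulVec_mulVec, Matrix.mul_nonsing_inv _ h₁, Matrix.one_mulVec]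
  have h1 : ‖Matrix.toEuclideanLin (Λ₀ * Λ₁⁻¹) x‖ = euclNorm ((Λ₀ * Λ₁⁻¹).mulVec w) := by
    rw [Matrix.toEuclideanLin_apply]; rfl
  have h2 : ‖x‖ = euclNorm w := by
    rw [euclNorm]; rfl
  rw [h1, h2, hMul, ← hback]
  exact key v
end

section
/- Let λ₁, λ₂ ∈ ℝ² be linearly independent, let σ ∈ ℝ² satisfy ‖σ‖ = ‖σ − λ₁‖ = ‖σ − λ₂‖, set s = ‖σ‖² and a₁₁ = ⟨λ₁,λ₁⟩, a₁₂ = ⟨λ₁,λ₂⟩, a₂₂ = ⟨λ₂,λ₂⟩, and define f(x₁₁, x₁₂, x₂₂) = x₁₁x₂₂(x₁₁ + x₂₂ − 2x₁₂) − 4s(x₁₁x₂₂ − x₁₂²), with partial derivatives f₁₁ = ∂f/∂x₁₁, f₁₂ = ∂f/∂x₁₂, f₂₂ = ∂f/∂x₂₂ evaluated at (a₁₁, a₁₂, a₂₂). Then the following are equivalent: (i) there exists a nonzero triple (α₁₁, α₁₂, α₂₂) ∈ ℝ³ with α₁₁f₁₁ + α₁₂f₁₂ + α₂₂f₂₂ =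 0 such that the symmetric matrix [[α₁₁, α₁₂], [α₁₂, α₂₂]] is positive semidefinite; (ii) the triangle with vertices 0, λ₁, λ₂ has an angle of measure at least π/2, i.e. a₁₂ ≤ 0 or a₁₂ ≥ a₁₁ or a₁₂ ≥ a₂₂. -/
/-!
A nonzero positive semidefinite `α` with `α₁₁A + α₁₂B + α₂₂C = 0` exists iff the form
`A x² + B xy + C y²` is not definite, i.e. iff `4AC ≤ B²`. For the circumcenter `σ` one has
`4 (a₁₁a₂₂ - a₁₂²) s = a₁₁a₂₂ (a₁₁ + a₂₂ - 2a₁₂)`, and substituting this value of `s` gives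
`(a₁₁a₂₂ - a₁₂²)(f₁₂² - 4f₁₁f₂₂) = -8 a₁₁a₂₂ · a₁₂ (a₁₁ - a₁₂)(a₂₂ - a₁₂)(a₁₁ + a₂₂ - 2a₁₂)`.
The first three of the last four factors are positive multiples of the cosines of the angles of
the triangle at `0`, `λ₁`, `λ₂`, and the fourth is `‖λ₁ - λ₂‖² > 0`, so the discriminant is
nonnegative iff some angle is at least `π/2`.
-/

open scoped RealInnerProductSpace

open Matrix in
theorem Matrix.posSemidef_fin_two_iff {a b c : ℝ} :
    (of ![![a, b], ![b, c]]).PosSemidef ↔ 0 ≤ a ∧ 0 ≤ c ∧ b ^ 2 ≤ a * c := by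
  have quad : ∀ x : Fin 2 → ℝ, star x ⬝ᵥ (of ![![a, b], ![b, c]] *ᵥ x)
      = a * x 0 ^ 2 + 2 * b * x 0 * x 1 + c * x 1 ^ 2 := by
    intro x
    simp [dotProduct, mulVec, Fin.sum_univ_two]
    ring
  have herm : (of ![![a, b], ![b, c]]).IsHermitian := by
    ext i j
    fin_cases i <;> fin_cases j <;> rfl
  simp only [posSemidef_iff_dotProduct_mulVec, quad, herm, true_and]
  constructor
  · intro h
    have ha := h ![1, 0]
    have hc := h ![0, 1]
    have hdiscrim : discrim a (2 * b) c ≤ 0 := discrim_le_zero fun t => by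
      simpa [sq] using h ![t, 1]
    simp only [Matrix.cons_val_zero, Matrix.cons_val_one, discrim] at ha hc hdiscrim
    refine ⟨by simpa using ha, by simpa using hc, by linarith⟩
  · rintro ⟨ha, hc, hb⟩ x
    rcases ha.eq_or_lt with rfl | ha
    · have hb0 : b = 0 := by nlinarith
      subst hb0
      nlinarith [sq_nonneg (x 1)]
    · have : 0 ≤ a * (a * x 0 ^ 2 + 2 * b * x 0 * x 1 + c * x 1 ^ 2) := by
        nlinarith [sq_nonneg (a * x 0 + b * x 1), sq_nonneg (x 1)]
      exact nonneg_of_mul_nonneg_right (by linarith) ha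

theorem eq_zero_of_posDef_pairing_eq_zero {A B C a b c : ℝ} (hA : 0 < A)
    (hdisc : B ^ 2 < 4 * A * C) (ha : 0 ≤ a) (hc : 0 ≤ c) (hb : b ^ 2 ≤ a * c)
    (hpair : a * A + b * B + c * C = 0) : a = 0 ∧ b = 0 ∧ c = 0 := by
  have hC : 0 < C := by nlinarith [sq_nonneg B]
  -- `(bB)² ≤ 4AC b² ≤ 4AC ac ≤ (aA + cC)² = (bB)²`, and the first step is strict unless `b = 0`.
  have hb0 : b = 0 := by
    have hsq : (a * A + c * C) ^ 2 = (b * B) ^ 2 := by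
      linear_combination (a * A + c * C - b * B) * hpair
    have : (4 * A * C - B ^ 2) * b ^ 2 ≤ 0 := by
      nlinarith [sq_nonneg (a * A - c * C),
        mul_le_mul_of_nonneg_left hb (by positivity : 0 ≤ 4 * A * C)]
    exact pow_eq_zero_iff two_ne_zero |>.mp (by nlinarith [sq_nonneg b])
  subst hb0
  refine ⟨?_, rfl, ?_⟩ <;> nlinarith [mul_nonneg ha hA.le, mul_nonneg hc hC.le]

theorem exists_ne_zero_posSemidef_pairing_eq_zero_iff (A B C : ℝ) :
    (∃ a b c : ℝ, ¬(a = 0 ∧ b = 0 ∧ c = 0) ∧ a * A + b * B + c * C = 0 ∧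
        (Matrix.of ![![a, b], ![b, c]]).PosSemidef) ↔ 4 * A * C ≤ B ^ 2 := by
  simp only [Matrix.posSemidef_fin_two_iff]
  constructor
  · rintro ⟨a, b, c, hne, hpair, ha, hc, hb⟩
    by_contra! hdisc
    rcases lt_trichotomy A 0 with hA | rfl | hA
    · exact hne <| eq_zero_of_posDef_pairing_eq_zero (A := -A) (B := -B) (C := -C)
        (neg_pos.2 hA) (by linarith) ha hc hb (by linear_combination -hpair)
    · nlinarith [sq_nonneg B]
    · exact hne <| eq_zero_of_posDef_pairing_eq_zero hA (by linarith) ha hc hb hpair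
  · intro hdisc
    rcases eq_or_ne A 0 with rfl | hA
    · exact ⟨1, 0, 0, by simp, by ring, zero_le_one, le_rfl, by norm_num⟩
    · -- a real root `x` of `A x² + B x + C` gives the rank-one solution `(x, 1)(x, 1)ᵀ`
      obtain ⟨x, hx⟩ := exists_quadratic_eq_zero hA
        ⟨√(discrim A B C), (Real.mul_self_sqrt (by rw [discrim]; linarith)).symm⟩
      exact ⟨x ^ 2, x, 1, by simp, by linear_combination hx, sq_nonneg x, zero_le_one,
        by rw [mul_one]⟩

theorem angle_factors_nonpos_iff {a₁₁ a₁₂ a₂₂ : ℝ} (h₁₁ : 0 < a₁₁) (h₂₂ : 0 < a₂₂)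
    (hdet : a₁₂ ^ 2 < a₁₁ * a₂₂) :
    a₁₂ * (a₁₁ - a₁₂) * (a₂₂ - a₁₂) * (a₁₁ + a₂₂ - 2 * a₁₂) ≤ 0 ↔
      a₁₂ ≤ 0 ∨ a₁₁ ≤ a₁₂ ∨ a₂₂ ≤ a₁₂ := by
  have hT : 0 < a₁₁ + a₂₂ - 2 * a₁₂ := by nlinarith [sq_nonneg (a₁₁ - a₂₂)]
  rw [← neg_nonneg, ← neg_mul, mul_nonneg_iff_of_pos_right hT, neg_nonneg]
  constructor
  · intro h
    by_contra! hpos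
    obtain ⟨h₀, h₁, h₂⟩ := hpos
    have : 0 < a₁₂ * (a₁₁ - a₁₂) * (a₂₂ - a₁₂) := by
      apply mul_pos (mul_pos h₀ _) <;> linarith
    linarith
  · rintro (h₀ | h₁ | h₂)
    · exact mul_nonpos_of_nonpos_of_nonneg
        (mul_nonpos_of_nonpos_of_nonneg h₀ (by linarith)) (by linarith)
    · have h₂ : a₁₂ < a₂₂ := by nlinarith
      exact mul_nonpos_of_nonpos_of_nonneg
        (mul_nonpos_of_nonneg_of_nonpos (by linarith) (by linarith)) (by linarith)
    · have h₁ : a₁₂ < a₁₁ := by nlinarith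
      exact mul_nonpos_of_nonneg_of_nonpos
        (mul_nonneg (by linarith) (by linarith)) (by linarith)

theorem deriv_quadratic (p q r x : ℝ) :
    deriv (fun t => p * t ^ 2 + q * t + r) x = 2 * p * x + q := by
  have h : HasDerivAt (fun t => p * t ^ 2 + q * t + r) (p * (2 * x) + q) x := by
    simpa using
      (((hasDerivAt_pow 2 x).const_mul p).add ((hasDerivAt_id x).const_mul q)).add_const r
  rw [h.deriv]
  ring

theorem deriv_deformation_polynomial {f : ℝ → ℝ → ℝ → ℝ} {s : ℝ}
    (hf : f = fun x₁₁ x₁₂ x₂₂ =>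
      x₁₁ * x₂₂ * (x₁₁ + x₂₂ - 2 * x₁₂) - 4 * s * (x₁₁ * x₂₂ - x₁₂ ^ 2))
    (a₁₁ a₁₂ a₂₂ : ℝ) :
    deriv (fun t => f t a₁₂ a₂₂) a₁₁ = a₂₂ * (2 * a₁₁ + a₂₂ - 2 * a₁₂) - 4 * s * a₂₂ ∧
    deriv (fun t => f a₁₁ t a₂₂) a₁₂ = -2 * a₁₁ * a₂₂ + 8 * s * a₁₂ ∧
    deriv (fun t => f a₁₁ a₁₂ t) a₂₂ = a₁₁ * (a₁₁ + 2 * a₂₂ - 2 * a₁₂) - 4 * s * a₁₁ := by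
  subst hf
  refine ⟨?_, ?_, ?_⟩
  · convert deriv_quadratic a₂₂ (a₂₂ * (a₂₂ - 2 * a₁₂) - 4 * s * a₂₂) (4 * s * a₁₂ ^ 2) a₁₁
      using 1
    · congr 1; funext t; ring
    · ring
  · convert deriv_quadratic (4 * s) (-2 * a₁₁ * a₂₂) (a₁₁ * a₂₂ * (a₁₁ + a₂₂ - 4 * s)) a₁₂
      using 1
    · congr 1; funext t; ring
    · ring
  · convert deriv_quadratic a₁₁ (a₁₁ * (a₁₁ - 2 * a₁₂) - 4 * s * a₁₁) (4 * s * a₁₂ ^ 2) a₂₂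
      using 1
    · congr 1; funext t; ring
    · ring

theorem gram_det_mul_discrim_partials {a₁₁ a₁₂ a₂₂ s : ℝ}
    (hs : 4 * (a₁₁ * a₂₂ - a₁₂ ^ 2) * s = a₁₁ * a₂₂ * (a₁₁ + a₂₂ - 2 * a₁₂)) :
    (a₁₁ * a₂₂ - a₁₂ ^ 2) * ((-2 * a₁₁ * a₂₂ + 8 * s * a₁₂) ^ 2
      - 4 * (a₂₂ * (2 * a₁₁ + a₂₂ - 2 * a₁₂) - 4 * s * a₂₂)
        * (a₁₁ * (a₁₁ + 2 * a₂₂ - 2 * a₁₂) - 4 * s * a₁₁)) =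
      -8 * a₁₁ * a₂₂ * (a₁₂ * (a₁₁ - a₁₂) * (a₂₂ - a₁₂) * (a₁₁ + a₂₂ - 2 * a₁₂)) := by
  linear_combination 4 * (2 * (a₁₁ * a₂₂ * (a₁₁ + a₂₂ - 2 * a₁₂))
    - 4 * (a₁₁ * a₂₂ - a₁₂ ^ 2) * s) * hs

section InnerProductSpace

variable {E : Type*} [NormedAddCommGroup E] [InnerProductSpace ℝ E]

theorem two_mul_inner_eq_inner_self_of_norm_eq_norm_sub {σ l : E} (h : ‖σ‖ = ‖σ - l‖) :
    2 * ⟪σ, l⟫ = ⟪l, l⟫ := by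
  have h2 := congrArg (· ^ 2) h
  simp only [norm_sub_sq_real, ← real_inner_self_eq_norm_sq l] at h2
  linarith

theorem four_mul_gram_det_mul_norm_sq_of_equidistant {l₁ l₂ σ : E}
    (hσ : σ ∈ Submodule.span ℝ {l₁, l₂}) (h₁ : ‖σ‖ = ‖σ - l₁‖) (h₂ : ‖σ‖ = ‖σ - l₂‖) :
    4 * (⟪l₁, l₁⟫ * ⟪l₂, l₂⟫ - ⟪l₁, l₂⟫ ^ 2) * ‖σ‖ ^ 2 =
      ⟪l₁, l₁⟫ * ⟪l₂, l₂⟫ * (⟪l₁, l₁⟫ + ⟪l₂, l₂⟫ - 2 * ⟪l₁, l₂⟫) := by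
  obtain ⟨x, y, rfl⟩ := Submodule.mem_span_pair.1 hσ
  have e₁ := two_mul_inner_eq_inner_self_of_norm_eq_norm_sub h₁
  have e₂ := two_mul_inner_eq_inner_self_of_norm_eq_norm_sub h₂
  rw [← real_inner_self_eq_norm_sq]
  simp only [inner_add_left, inner_add_right, real_inner_smul_left, real_inner_smul_right,
    real_inner_comm l₁ l₂] at e₁ e₂ ⊢
  set a := ⟪l₁, l₁⟫
  set b := ⟪l₁, l₂⟫
  set c := ⟪l₂, l₂⟫
  linear_combination (c * (2 * (x * a + y * b) + a) - 4 * b * (x * b + y * c)) * e₁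
    + (a * (2 * (x * b + y * c) + c) - 2 * a * b) * e₂

end InnerProductSpace

/-- the paper's Proposition 1: For the hexagonal honeycomb framework with
circumcenter `σ` of the triangle `0, λ₁, λ₂` and `s = ‖σ‖²`, there is a nonzero vector
`(α₁₁, α₁₂, α₂₂)` in the tangent plane `α₁₁f₁₁ + α₁₂f₁₂ + α₂₂f₂₂ = 0` of the deformation
space `f = 0` whose associated symmetric 2×2 matrix is positive semidefinite iff the
triangle with vertices `0, λ₁, λ₂` has an angle of measure at least `π/2`. -/
theorem stmt_12 (lam₁ lam₂ σ : EuclideanSpace ℝ (Fin 2))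
    (hli : LinearIndependent ℝ ![lam₁, lam₂])
    (h₁ : ‖σ‖ = ‖σ - lam₁‖) (h₂ : ‖σ‖ = ‖σ - lam₂‖)
    (s a₁₁ a₁₂ a₂₂ : ℝ)
    (hs : s = ‖σ‖ ^ 2)
    (ha₁₁ : a₁₁ = ⟪lam₁, lam₁⟫) (ha₁₂ : a₁₂ = ⟪lam₁, lam₂⟫) (ha₂₂ : a₂₂ = ⟪lam₂, lam₂⟫)
    (f : ℝ → ℝ → ℝ → ℝ)
    (hf : f = fun x₁₁ x₁₂ x₂₂ =>
      x₁₁ * x₂₂ * (x₁₁ + x₂₂ - 2 * x₁₂) - 4 * s * (x₁₁ * x₂₂ - x₁₂ ^ 2))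
    (f₁₁ f₁₂ f₂₂ : ℝ)
    (hf₁₁ : f₁₁ = deriv (fun t => f t a₁₂ a₂₂) a₁₁)
    (hf₁₂ : f₁₂ = deriv (fun t => f a₁₁ t a₂₂) a₁₂)
    (hf₂₂ : f₂₂ = deriv (fun t => f a₁₁ a₁₂ t) a₂₂) :
    (∃ α₁₁ α₁₂ α₂₂ : ℝ, ¬(α₁₁ = 0 ∧ α₁₂ = 0 ∧ α₂₂ = 0) ∧
        α₁₁ * f₁₁ + α₁₂ * f₁₂ + α₂₂ * f₂₂ = 0 ∧
        (Matrix.of ![![α₁₁, α₁₂], ![α₁₂, α₂₂]]).PosSemidef) ↔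
      (a₁₂ ≤ 0 ∨ a₁₁ ≤ a₁₂ ∨ a₂₂ ≤ a₁₂) := by
  have hG := Matrix.posDef_gram_of_linearIndependent (𝕜 := ℝ) hli
  have h₁₁ : 0 < a₁₁ := ha₁₁ ▸ hG.diag_pos (i := 0)
  have h₂₂ : 0 < a₂₂ := ha₂₂ ▸ hG.diag_pos (i := 1)
  have hdet : 0 < a₁₁ * a₂₂ - a₁₂ ^ 2 := by
    have h := hG.det_pos
    simp only [Matrix.det_fin_two, Matrix.gram_apply, Matrix.cons_val_zero, Matrix.cons_val_one,
      real_inner_comm lam₁ lam₂, ← ha₁₁, ← ha₁₂, ← ha₂₂] at h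
    linarith
  have hσ : σ ∈ Submodule.span ℝ {lam₁, lam₂} := by
    rw [← Matrix.range_cons_cons_empty lam₁ lam₂ ![],
      hli.span_eq_top_of_card_eq_finrank (by simp)]
    trivial
  have hcirc := four_mul_gram_det_mul_norm_sq_of_equidistant hσ h₁ h₂
  rw [← ha₁₁, ← ha₁₂, ← ha₂₂, ← hs] at hcirc
  obtain ⟨d₁₁, d₁₂, d₂₂⟩ := deriv_deformation_polynomial hf a₁₁ a₁₂ a₂₂
  rw [exists_ne_zero_posSemidef_pairing_eq_zero_iff, ← sub_nonneg,
    ← angle_factors_nonpos_iff h₁₁ h₂₂ (by linarith), hf₁₁, hf₁₂, hf₂₂, d₁₁, d₁₂, d₂₂,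
    ← mul_nonneg_iff_of_pos_left hdet, gram_det_mul_discrim_partials hcirc]
  have hprod := mul_pos h₁₁ h₂₂
  constructor <;> intro h <;> nlinarith
end

section
/- For θ ∈ ℝ define the real symmetric 3×3 matrix ω(θ) with entries ω₁₁(θ) = ω₂₂(θ) = 4(1 + √3·cos θ)², ω₁₂(θ) = ω₂₁(θ) = −2(1 + √3·cos θ)², ω₃₃(θ) = 36·cos²θ, and ω₁₃ = ω₃₁ = ω₂₃ = ω₃₂ = 0. Then for every θ ∈ (0, π/2), the entrywise derivative ω′(θ) is a negative definite matrix. -/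
open scoped Matrix

/-- A real `d × d` matrix is negative definite if it is symmetric and
`xᵀ M x < 0` for all nonzero `x ∈ ℝ^d`. -/
def Matrix.NegDef {d : ℕ} (M : Matrix (Fin d) (Fin d) ℝ) : Prop :=
  M.IsSymm ∧ ∀ x : Fin d → ℝ, x ≠ 0 → x ⬝ᵥ M.mulVec x < 0

/-- The Gram matrix of the period-lattice generators of the idealized tilt model of
quartz with tilt angle `θ`. -/
noncomputable def quartzGram (θ : ℝ) : Matrix (Fin 3) (Fin 3) ℝ :=
  !![4 * (1 + Real.sqrt 3 * Real.cos θ) ^ 2, -2 * (1 + Real.sqrt 3 * Real.cos θ) ^ 2, 0;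
     -2 * (1 + Real.sqrt 3 * Real.cos θ) ^ 2, 4 * (1 + Real.sqrt 3 * Real.cos θ) ^ 2, 0;
     0, 0, 36 * Real.cos θ ^ 2]

/-!
Writing `c = 1 + √3 cos θ`, the Gram matrix is `c² H + 36 cos² θ E₃₃` with `H` the (positive
definite) Gram matrix `[[4, -2], [-2, 4]]` of the hexagonal basal lattice. On `(0, π/2)` both
`c²` and `cos² θ` are strictly decreasing, so `ω'` is a negative multiple of `H` on the basal
plane plus a negative multiple of `E₃₃`, and is therefore negative definite.
-/

open Real

lemma Matrix.negDef_hexagonalBlock {a b : ℝ} (ha : 0 < a) (hb : 0 < b) :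
    Matrix.NegDef !![-(2 * a), a, 0; a, -(2 * a), 0; 0, 0, -b] := by
  refine ⟨by ext i j; fin_cases i <;> fin_cases j <;> rfl, fun x hx => ?_⟩
  have hform : x ⬝ᵥ !![-(2 * a), a, 0; a, -(2 * a), 0; 0, 0, -b] *ᵥ x
      = -(a * (x 0 ^ 2 + x 1 ^ 2 + (x 0 - x 1) ^ 2) + b * x 2 ^ 2) := by
    simp only [dotProduct, mulVec, Fin.sum_univ_three, of_apply, cons_val', cons_val_zero,
      cons_val_one, cons_val, cons_val_fin_one]
    ring
  rw [hform, neg_lt_zero]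
  obtain ⟨i, hi⟩ := Function.ne_iff.mp hx
  fin_cases i <;> simp only [Pi.zero_apply] at hi <;> positivity

lemma deriv_quartzGram (θ : ℝ) :
    Matrix.of (fun i j => deriv (fun t => quartzGram t i j) θ) =
      !![-(2 * (4 * √3 * sin θ * (1 + √3 * cos θ))), 4 * √3 * sin θ * (1 + √3 * cos θ), 0;
         4 * √3 * sin θ * (1 + √3 * cos θ), -(2 * (4 * √3 * sin θ * (1 + √3 * cos θ))), 0;
         0, 0, -(72 * cos θ * sin θ)] := by
  ext i j
  fin_cases i <;> fin_cases j <;> simp [quartzGram] <;> ring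

/-- The entrywise derivative of the quartz Gram curve `ω(θ)` is negative
definite for every `θ ∈ (0, π/2)`. -/
theorem stmt_13 :
    ∀ θ ∈ Set.Ioo 0 (Real.pi / 2),
      Matrix.NegDef (Matrix.of fun i j => deriv (fun t => quartzGram t i j) θ) := by
  rintro θ ⟨hθ₀, hθ₁⟩
  have hsin : 0 < sin θ := sin_pos_of_pos_of_lt_pi hθ₀ (by linarith [pi_pos])
  have hcos : 0 < cos θ := cos_pos_of_mem_Ioo ⟨by linarith, hθ₁⟩
  rw [deriv_quartzGram]
  exact Matrix.negDef_hexagonalBlock (by positivity) (by positivity)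
end

section
/- For θ ∈ ℝ define the diagonal real 3×3 matrix ω(θ) = diag(8(1 + cos θ)², 8(1 + cos θ)², 64·cos²θ). Then for every θ ∈ (0, π/2), the entrywise derivative ω′(θ) is a negative definite matrix. -/
/-!
Since `ω(θ)` is diagonal, `ω′(θ)` is the diagonal matrix of the derivatives of its entries,
`-16 sin θ (1 + cos θ)` (twice) and `-128 sin θ cos θ`. Both are negative on `(0, π/2)`,
where `sin` and `cos` are positive, and a diagonal matrix with negative diagonal is negative
definite.
-/

open scoped Matrix

/-- The Gram matrix of the period-lattice generators of the idealized tilt model of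
cristobalite with tilt angle `θ`. -/
noncomputable def cristobaliteGram (θ : ℝ) : Matrix (Fin 3) (Fin 3) ℝ :=
  Matrix.diagonal
    ![8 * (1 + Real.cos θ) ^ 2, 8 * (1 + Real.cos θ) ^ 2, 64 * Real.cos θ ^ 2]

theorem Matrix.negDef_diagonal {d : ℕ} {v : Fin d → ℝ} (hv : ∀ i, v i < 0) :
    (Matrix.diagonal v).NegDef := by
  refine ⟨Matrix.isSymm_diagonal v, fun x hx => ?_⟩
  obtain ⟨i, hi⟩ := Function.ne_iff.mp hx
  calc x ⬝ᵥ (Matrix.diagonal v).mulVec x = ∑ j, v j * x j ^ 2 := by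
        simp only [dotProduct, Matrix.mulVec_diagonal]
        exact Finset.sum_congr rfl fun j _ => by ring
    _ < ∑ _j : Fin d, (0 : ℝ) :=
        Finset.sum_lt_sum (fun j _ => mul_nonpos_of_nonpos_of_nonneg (hv j).le (sq_nonneg _))
          ⟨i, Finset.mem_univ i, mul_neg_of_neg_of_pos (hv i) (pow_two_pos_of_ne_zero hi)⟩
    _ = 0 := Finset.sum_const_zero

theorem Matrix.of_deriv_diagonal {n : Type*} [DecidableEq n] (v : ℝ → n → ℝ) (θ : ℝ) :
    Matrix.of (fun i j => deriv (fun t => Matrix.diagonal (v t) i j) θ)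
      = Matrix.diagonal fun k => deriv (fun t => v t k) θ := by
  ext i j
  rcases eq_or_ne i j with rfl | hij
  · simp
  · simp [Matrix.diagonal_apply_ne _ hij]

theorem hasDerivAt_eight_mul_one_add_cos_sq (θ : ℝ) :
    HasDerivAt (fun t => 8 * (1 + Real.cos t) ^ 2) (-(16 * Real.sin θ * (1 + Real.cos θ))) θ := by
  refine ((((Real.hasDerivAt_cos θ).const_add 1).pow 2).const_mul (8 : ℝ)).congr_deriv ?_
  ring

theorem hasDerivAt_sixtyFour_mul_cos_sq (θ : ℝ) :
    HasDerivAt (fun t => 64 * Real.cos t ^ 2) (-(128 * Real.cos θ * Real.sin θ)) θ := by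
  refine (((Real.hasDerivAt_cos θ).pow 2).const_mul (64 : ℝ)).congr_deriv ?_
  ring

/-- The entrywise derivative of the cristobalite Gram curve `ω(θ)` is
negative definite for every `θ ∈ (0, π/2)`. -/
theorem stmt_14 :
    ∀ θ ∈ Set.Ioo 0 (Real.pi / 2),
      Matrix.NegDef (Matrix.of fun i j => deriv (fun t => cristobaliteGram t i j) θ) := by
  rintro θ ⟨hθ0, hθ⟩
  have hsin : 0 < Real.sin θ := Real.sin_pos_of_pos_of_lt_pi hθ0 (by linarith [Real.pi_pos])
  have hcos : 0 < Real.cos θ := Real.cos_pos_of_mem_Ioo ⟨by linarith, hθ⟩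
  unfold cristobaliteGram
  rw [Matrix.of_deriv_diagonal]
  refine Matrix.negDef_diagonal fun k => ?_
  fin_cases k <;>
    simp only [Fin.zero_eta, Fin.mk_one, Fin.reduceFinMk, Fin.isValue, Matrix.cons_val_zero,
      Matrix.cons_val_one, Matrix.cons_val, (hasDerivAt_eight_mul_one_add_cos_sq θ).deriv,
      (hasDerivAt_sixtyFour_mul_cos_sq θ).deriv, neg_neg_iff_pos] <;>
    positivity
end

section
/- Let α = (α₁, α₂, α₃) and β = (β₁, β₂, β₃) be vectors in ℝ³ and r ∈ ℝ with ⟨α, α⟩ = 1 and ⟨β − α, β − α⟩ = r². Define a₁₁ = 4α₁², a₂₂ = 4α₂², a₃₃ = β₁² + β₂² + β₃², a₁₃ = 2α₁β₁, a₂₃ = 2α₂β₂, and Δ = a₁₁a₂₂a₃₃ − a₂₂a₁₃² − a₁₁a₂₃². Then a₁₁·a₂₂·(a₃₃ − a₁₃ − a₂₃ + 1 − r²)² − Δ·(4 − a₁₁ − a₂₂) = 0. -/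
/-- For `α = (α₁,α₂,α₃)`, `β = (β₁,β₂,β₃)` in `ℝ³` with `⟨α,α⟩ = 1` and
`⟨β−α, β−α⟩ = r²`, the Gram quantities `a₁₁ = 4α₁²`, `a₂₂ = 4α₂²`, `a₃₃ = ⟨β,β⟩`,
`a₁₃ = 2α₁β₁`, `a₂₃ = 2α₂β₂` satisfy the quartic equation
`a₁₁a₂₂(a₃₃ − a₁₃ − a₂₃ + 1 − r²)² − Δ(4 − a₁₁ − a₂₂) = 0`, where
`Δ = a₁₁a₂₂a₃₃ - a₂₂a₁₃² - a₁₁a₂₃²`. -/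
theorem stmt_15 (α₁ α₂ α₃ β₁ β₂ β₃ r : ℝ)
    (hα : α₁ ^ 2 + α₂ ^ 2 + α₃ ^ 2 = 1)
    (hβ : (β₁ - α₁) ^ 2 + (β₂ - α₂) ^ 2 + (β₃ - α₃) ^ 2 = r ^ 2)
    (a₁₁ a₂₂ a₃₃ a₁₃ a₂₃ Δ : ℝ)
    (h11 : a₁₁ = 4 * α₁ ^ 2) (h22 : a₂₂ = 4 * α₂ ^ 2)
    (h33 : a₃₃ = β₁ ^ 2 + β₂ ^ 2 + β₃ ^ 2)
    (h13 : a₁₃ = 2 * α₁ * β₁) (h23 : a₂₃ = 2 * α₂ * β₂)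
    (hΔ : Δ = a₁₁ * a₂₂ * a₃₃ - a₂₂ * a₁₃ ^ 2 - a₁₁ * a₂₃ ^ 2) :
    a₁₁ * a₂₂ * (a₃₃ - a₁₃ - a₂₃ + 1 - r ^ 2) ^ 2 - Δ * (4 - a₁₁ - a₂₂) = 0 := by
  subst hΔ h11 h22 h33 h13 h23
  have key : β₁ ^ 2 + β₂ ^ 2 + β₃ ^ 2 - 2 * α₁ * β₁ - 2 * α₂ * β₂ + 1 - r ^ 2
      = 2 * α₃ * β₃ := by linear_combination hβ - hα
  rw [key]
  have h3 : 4 - 4 * α₁ ^ 2 - 4 * α₂ ^ 2 = 4 * α₃ ^ 2 := by linear_combination -4 * hα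
  rw [h3]; ring
end
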